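/- arXiv:2203.04054 — 4 statements merged into one kernel-verified Lean document; each statement's English description precedes it below -/
import Mathlib

section
/- For the unit sphere S^n ⊂ R^{n+1} with the angular metric ∢(x,y) = arccos⟨x,y⟩ and p ≥ 1, the diameter of the p-Wasserstein space W_p(S^n) equals π, and W_p(μ,ν) = π holds if and only if μ = δ_x and ν = δ_{-x} for some x ∈ S^n. -/
open MeasureTheory Filter

/-- The `p`-Wasserstein distance with cost function `c` (the distance of the
underlying space): infimum over couplings of `∫ c(x,y)^p dπ`, to the power `1/p`. -/
noncomputable def wassersteinDist {X : Type*} [MeasurableSpace X]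
    (c : X → X → ℝ) (p : ℝ) (μ ν : Measure X) : ℝ :=
  sInf {r : ℝ | ∃ π : Measure (X × X), IsProbabilityMeasure π ∧
      π.map Prod.fst = μ ∧ π.map Prod.snd = ν ∧
      r = ∫ q, c q.1 q.2 ^ p ∂π} ^ (1 / p)

/-- The unit sphere of `ℝ^{n+1}`. -/
abbrev Sph (n : ℕ) := Metric.sphere (0 : EuclideanSpace ℝ (Fin (n + 1))) 1

/-- The angular (geodesic) distance on the sphere: `∢(x,y) = arccos ⟨x,y⟩`. -/
noncomputable def sphAngle {n : ℕ} (x y : Sph n) : ℝ :=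
  Real.arccos (inner ℝ (x : EuclideanSpace ℝ (Fin (n + 1))) (y : EuclideanSpace ℝ (Fin (n + 1))))

/-!
A coupling costs at most `π ^ p`, since the angular distance never exceeds `π`, so
`W_p ≤ π`; a pair of antipodal Dirac masses has only one coupling, of cost exactly `π ^ p`.
Conversely, if `W_p(μ, ν) = π` then already the product coupling `μ ⊗ ν` costs `π ^ p`,
so `μ ⊗ ν`-almost every pair `(x, y)` is antipodal, `y = -x`. Fixing a typical `x₀` forces
`ν = δ_{-x₀}`, and then `μ = δ_{x₀}`.
-/

namespace MeasureTheory.Measure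

variable {α β : Type*} [MeasurableSpace α] [MeasurableSpace β]

theorem eq_dirac_of_ae_eq {μ : Measure α} [IsProbabilityMeasure μ] {a : α}
    (h : ∀ᵐ x ∂μ, x = a) : μ = dirac a := by
  simpa using (ProbabilityTheory.hasLaw_dirac_of_ae_eq (X := id) h).map_eq

theorem eq_dirac_of_map_fst_of_map_snd [MeasurableSingletonClass α]
    [MeasurableSingletonClass β] {π : Measure (α × β)} [IsProbabilityMeasure π] {a : α} {b : β}
    (h₁ : π.map Prod.fst = dirac a) (h₂ : π.map Prod.snd = dirac b) :
    π = dirac (a, b) := by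
  have ha : Prod.fst =ᵐ[π] fun _ ↦ a := ProbabilityTheory.HasLaw.ae_eq_of_dirac ⟨by fun_prop, h₁⟩
  have hb : Prod.snd =ᵐ[π] fun _ ↦ b := ProbabilityTheory.HasLaw.ae_eq_of_dirac ⟨by fun_prop, h₂⟩
  refine eq_dirac_of_ae_eq ?_
  filter_upwards [ha, hb] with q hqa hqb
  exact Prod.ext hqa hqb

theorem exists_eq_dirac_of_ae_prod_graph [MeasurableSingletonClass β] {μ : Measure α}
    {ν : Measure β} [IsProbabilityMeasure μ] [IsProbabilityMeasure ν] {f : α → β}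
    (hf : Function.Injective f) (h : ∀ᵐ q ∂μ.prod ν, q.2 = f q.1) :
    ∃ a, μ = dirac a ∧ ν = dirac (f a) := by
  have h' : ∀ᵐ x ∂μ, ∀ᵐ y ∂ν, y = f x := ae_ae_of_ae_prod h
  obtain ⟨a, ha⟩ := h'.exists
  have hν : ν = dirac (f a) := eq_dirac_of_ae_eq ha
  refine ⟨a, eq_dirac_of_ae_eq ?_, hν⟩
  filter_upwards [h'] with x hx
  rw [hν, ae_dirac_eq, eventually_pure] at hx
  exact hf hx.symm

end MeasureTheory.Measure

section BoundedCost

variable {X : Type*} [MeasurableSpace X]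

def couplingCosts (c : X → X → ℝ) (p : ℝ) (μ ν : Measure X) : Set ℝ :=
  {r : ℝ | ∃ π : Measure (X × X), IsProbabilityMeasure π ∧
      π.map Prod.fst = μ ∧ π.map Prod.snd = ν ∧
      r = ∫ q, c q.1 q.2 ^ p ∂π}

variable {c : X → X → ℝ} {p D : ℝ} {μ ν : Measure X}

theorem wassersteinDist_eq_sInf_couplingCosts :
    wassersteinDist c p μ ν = sInf (couplingCosts c p μ ν) ^ (1 / p) :=
  rfl

theorem integral_prod_mem_couplingCosts [IsProbabilityMeasure μ] [IsProbabilityMeasure ν] :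
    ∫ q, c q.1 q.2 ^ p ∂μ.prod ν ∈ couplingCosts c p μ ν :=
  ⟨μ.prod ν, inferInstance, by simp, by simp, rfl⟩

theorem couplingCosts_dirac_dirac [MeasurableSingletonClass X] (x y : X) :
    couplingCosts c p (Measure.dirac x) (Measure.dirac y) = {c x y ^ p} := by
  ext r
  constructor
  · rintro ⟨π, hπ, h₁, h₂, rfl⟩
    simp [Measure.eq_dirac_of_map_fst_of_map_snd h₁ h₂]
  · rintro rfl
    exact ⟨Measure.dirac (x, y), inferInstance, Measure.map_dirac' measurable_fst _,
      Measure.map_dirac' measurable_snd _, by simp⟩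

theorem wassersteinDist_dirac_dirac [MeasurableSingletonClass X] (hp : p ≠ 0) {x y : X}
    (hc : 0 ≤ c x y) : wassersteinDist c p (Measure.dirac x) (Measure.dirac y) = c x y := by
  rw [wassersteinDist_eq_sInf_couplingCosts, couplingCosts_dirac_dirac, csInf_singleton, one_div,
    Real.rpow_rpow_inv hc hp]

theorem nonneg_of_mem_couplingCosts (hc₀ : ∀ x y, 0 ≤ c x y) {r : ℝ}
    (hr : r ∈ couplingCosts c p μ ν) : 0 ≤ r := by
  obtain ⟨_, _, _, _, rfl⟩ := hr
  exact integral_nonneg fun _ ↦ Real.rpow_nonneg (hc₀ _ _) p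

theorem sInf_couplingCosts_nonneg (hc₀ : ∀ x y, 0 ≤ c x y) :
    0 ≤ sInf (couplingCosts c p μ ν) :=
  Real.sInf_nonneg fun _ ↦ nonneg_of_mem_couplingCosts hc₀

theorem integral_rpow_le_of_le (hc₀ : ∀ x y, 0 ≤ c x y) (hcD : ∀ x y, c x y ≤ D) (hp : 0 ≤ p)
    (π : Measure (X × X)) [IsProbabilityMeasure π] : ∫ q, c q.1 q.2 ^ p ∂π ≤ D ^ p := by
  calc ∫ q, c q.1 q.2 ^ p ∂π ≤ ∫ _, D ^ p ∂π :=
        integral_mono_of_nonneg (.of_forall fun q ↦ Real.rpow_nonneg (hc₀ _ _) p)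
          (integrable_const _)
          (.of_forall fun q ↦ Real.rpow_le_rpow (hc₀ _ _) (hcD _ _) hp)
    _ = D ^ p := by simp

theorem sInf_couplingCosts_le (hc₀ : ∀ x y, 0 ≤ c x y) (hcD : ∀ x y, c x y ≤ D) (hp : 0 ≤ p)
    [IsProbabilityMeasure μ] [IsProbabilityMeasure ν] : sInf (couplingCosts c p μ ν) ≤ D ^ p :=
  csInf_le_of_le ⟨0, fun _ ↦ nonneg_of_mem_couplingCosts hc₀⟩ integral_prod_mem_couplingCosts
    (integral_rpow_le_of_le hc₀ hcD hp _)

theorem wassersteinDist_le_of_le (hc₀ : ∀ x y, 0 ≤ c x y) (hcD : ∀ x y, c x y ≤ D) (hp : 0 < p)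
    [IsProbabilityMeasure μ] [IsProbabilityMeasure ν] : wassersteinDist c p μ ν ≤ D := by
  obtain ⟨x⟩ := nonempty_of_isProbabilityMeasure μ
  have hD : 0 ≤ D := (hc₀ x x).trans (hcD x x)
  calc wassersteinDist c p μ ν ≤ (D ^ p) ^ (1 / p) :=
        Real.rpow_le_rpow (sInf_couplingCosts_nonneg hc₀) (sInf_couplingCosts_le hc₀ hcD hp.le)
          (by positivity)
    _ = D := by rw [one_div, Real.rpow_rpow_inv hD hp.ne']

theorem ae_cost_eq_of_wassersteinDist_eq (hc₀ : ∀ x y, 0 ≤ c x y) (hcD : ∀ x y, c x y ≤ D)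
    (hc : Measurable (Function.uncurry c)) (hp : 0 < p)
    [IsProbabilityMeasure μ] [IsProbabilityMeasure ν] (hW : wassersteinDist c p μ ν = D) :
    ∀ᵐ q ∂μ.prod ν, c q.1 q.2 = D := by
  obtain ⟨x⟩ := nonempty_of_isProbabilityMeasure μ
  have hD : 0 ≤ D := (hc₀ x x).trans (hcD x x)
  have hle : ∀ q : X × X, c q.1 q.2 ^ p ≤ D ^ p := fun _ ↦
    Real.rpow_le_rpow (hc₀ _ _) (hcD _ _) hp.le
  have hint : Integrable (fun q : X × X ↦ c q.1 q.2 ^ p) (μ.prod ν) :=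
    .of_bound (hc.pow_const p).aestronglyMeasurable (D ^ p) (.of_forall fun q ↦ by
      rw [Real.norm_of_nonneg (Real.rpow_nonneg (hc₀ _ _) p)]
      exact hle q)
  have hsInf : sInf (couplingCosts c p μ ν) = D ^ p := by
    rw [← hW, wassersteinDist_eq_sInf_couplingCosts, one_div,
      Real.rpow_inv_rpow (sInf_couplingCosts_nonneg hc₀) hp.ne']
  have hprod : ∫ q, c q.1 q.2 ^ p ∂μ.prod ν = ∫ _, D ^ p ∂μ.prod ν := by
    rw [integral_const, probReal_univ, one_smul]
    exact le_antisymm (integral_rpow_le_of_le hc₀ hcD hp.le _)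
      (hsInf ▸ csInf_le ⟨0, fun _ ↦ nonneg_of_mem_couplingCosts hc₀⟩
        integral_prod_mem_couplingCosts)
  filter_upwards [(integral_eq_iff_of_ae_le hint (integrable_const _) (.of_forall hle)).1 hprod]
    with q hq
  exact (Real.rpow_left_inj (hc₀ _ _) hD hp.ne').1 hq

end BoundedCost

section Sphere

variable {n : ℕ}

theorem sphAngle_nonneg (x y : Sph n) : 0 ≤ sphAngle x y := Real.arccos_nonneg _

theorem sphAngle_le_pi (x y : Sph n) : sphAngle x y ≤ Real.pi := Real.arccos_le_pi _

theorem measurable_sphAngle : Measurable (Function.uncurry (sphAngle (n := n))) := by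
  unfold sphAngle Function.uncurry
  fun_prop

theorem sphAngle_eq_pi_iff {x y : Sph n} : sphAngle x y = Real.pi ↔ y = -x := by
  have hx := norm_eq_of_mem_sphere x
  have hy := norm_eq_of_mem_sphere y
  rw [sphAngle, Real.arccos_eq_pi, Subtype.ext_iff, coe_neg_sphere, eq_comm, neg_eq_iff_eq_neg,
    ← inner_eq_neg_one_iff_of_norm_eq_one (𝕜 := ℝ) hx hy]
  exact ⟨fun h ↦ le_antisymm h (neg_one_le_real_inner_of_norm_eq_one hx hy), le_of_eq⟩

end Sphere

/-- The diameter of `W_p(𝕊ⁿ)` is `π`, and this maximal distance is attained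
exactly by pairs of Dirac measures at antipodal points. -/
theorem diam_wasserstein_sphere (n : ℕ) {p : ℝ} (hp : 1 ≤ p) :
    (sSup {d : ℝ | ∃ μ ν : Measure (Sph n), IsProbabilityMeasure μ ∧
        IsProbabilityMeasure ν ∧ d = wassersteinDist sphAngle p μ ν} = Real.pi) ∧
    (∀ μ ν : Measure (Sph n), IsProbabilityMeasure μ → IsProbabilityMeasure ν →
      (wassersteinDist sphAngle p μ ν = Real.pi ↔
        ∃ x : Sph n, μ = Measure.dirac x ∧ ν = Measure.dirac (-x))) := by
  have hp₀ : 0 < p := by linarith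
  have hdirac (x : Sph n) : wassersteinDist sphAngle p (.dirac x) (.dirac (-x)) = Real.pi := by
    rw [wassersteinDist_dirac_dirac hp₀.ne' (sphAngle_nonneg _ _), sphAngle_eq_pi_iff]
  obtain ⟨x₀⟩ : Nonempty (Sph n) := (NormedSpace.sphere_nonempty.2 zero_le_one).to_subtype
  refine ⟨IsGreatest.csSup_eq ⟨⟨_, _, inferInstance, inferInstance, (hdirac x₀).symm⟩, ?_⟩,
    fun μ ν hμ hν ↦ ⟨fun hW ↦ ?_, ?_⟩⟩
  · rintro d ⟨μ, ν, hμ, hν, rfl⟩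
    exact wassersteinDist_le_of_le sphAngle_nonneg sphAngle_le_pi hp₀
  · refine Measure.exists_eq_dirac_of_ae_prod_graph neg_injective ?_
    filter_upwards [ae_cost_eq_of_wassersteinDist_eq sphAngle_nonneg sphAngle_le_pi
      measurable_sphAngle hp₀ hW] with q hq
    exact sphAngle_eq_pi_iff.1 hq
  · rintro ⟨x, rfl, rfl⟩
    exact hdirac x
end

section
/- Let n ≥ 2, p ≥ 1 with p ≠ 1 and p ≠ 2, x ∈ T^n, j ∈ {1,...,n}, and μ a Borel probability measure on T^n. Then lim_{s→0+} [T^p_μ(x + s e^j) − 2 T^p_μ(x) + T^p_μ(x − s e^j)]/s = −p ∫_{H(x + (1/2)e^j, j)} (1/4 + ϱ_{n−1}(x̌_j, y̌_j)^2)^{(p−2)/2} dμ(y). -/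
/-!
Write `ϱ(x, y)^p = f(d_j)` with `f(u) = (u² + r²)^{p/2}`, where `d_j` is the circle distance of the
`j`-th coordinates and `r = ϱ_{n-1}(x̌_j, y̌_j)`; shifting `x` along `e^j` changes only `d_j`.
For `p > 1` the even function `f` is `C¹`, and `d_j` is locally `|t ∓ s|` in the shift `s`, so the
symmetric second difference quotient of `ϱ(·, y)^p` tends to `0` unless `y_j` is antipodal to `x_j`.
In that case `d_j = 1/2 - s` for both shifts and the quotient tends to
`-2 f'(1/2) = -p (1/4 + r²)^{(p-2)/2}`. The quotients are bounded uniformly in `y`, because `ϱ` is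
`1`-Lipschitz and `t ↦ t^p` is Lipschitz on `[0, √n]`, so dominated convergence gives the limit.
-/

open MeasureTheory Filter

/-- The flat `n`-dimensional torus `ℝ^n/ℤ^n`. -/
abbrev Torus (n : ℕ) := Fin n → AddCircle (1 : ℝ)

/-- The flat (ℓ²) metric on the torus: each coordinate distance is the
distance `|(x_k - y_k) mod 1|` on `ℝ/ℤ`. -/
noncomputable def torusDist {n : ℕ} (x y : Torus n) : ℝ :=
  Real.sqrt (∑ k, dist (x k) (y k) ^ 2)

/-- The `p`-Wasserstein potential of `μ` at `x`: `T^p_μ(x) = ∫ ϱ(x,y)^p dμ(y)`. -/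
noncomputable def torusPotential {n : ℕ} (p : ℝ) (μ : MeasureTheory.Measure (Torus n))
    (x : Torus n) : ℝ :=
  ∫ y, torusDist x y ^ p ∂μ

/-- The point `x + s·e^j` on the torus. -/
noncomputable def torusShift {n : ℕ} (x : Torus n) (j : Fin n) (s : ℝ) : Torus n :=
  fun i => if i = j then x i + ((s : ℝ) : AddCircle (1 : ℝ)) else x i

/-- The "hyperplane" `H(z,j) = {y : y_j = z_j}`. -/
def torusHyperplane {n : ℕ} (z : Torus n) (j : Fin n) : Set (Torus n) :=
  {y | y j = z j}

/-- The flat distance on `𝕋^{n-1}` between `x̌_j` and `y̌_j`, the points obtained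
from `x` and `y` by dropping the `j`-th coordinate. -/
noncomputable def torusDistDrop {n : ℕ} (j : Fin n) (x y : Torus n) : ℝ :=
  Real.sqrt (∑ i ∈ Finset.univ.erase j, dist (x i) (y i) ^ 2)

open Set Topology

theorem abs_rpow_sub_rpow_le {p M a b : ℝ} (hp : 1 ≤ p) (ha : a ∈ Icc 0 M) (hb : b ∈ Icc 0 M) :
    |a ^ p - b ^ p| ≤ p * M ^ (p - 1) * |a - b| := by
  refine (convex_Icc 0 M).norm_image_sub_le_of_norm_hasDerivWithin_le
    (fun z _ => (Real.hasDerivAt_rpow_const (Or.inr hp)).hasDerivWithinAt) (fun z hz => ?_) hb ha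
  rw [Real.norm_eq_abs, abs_of_nonneg (by have := Real.rpow_nonneg hz.1 (p - 1); positivity)]
  gcongr
  exacts [hz.1, hz.2]

theorem hasDerivAt_sq_add_sq_rpow {p : ℝ} (hp : 1 < p) (r u : ℝ) :
    HasDerivAt (fun v => (v ^ 2 + r ^ 2) ^ (p / 2))
      (p * u * (u ^ 2 + r ^ 2) ^ ((p - 2) / 2)) u := by
  rcases eq_or_ne (u ^ 2 + r ^ 2) 0 with h | h
  · obtain ⟨rfl, rfl⟩ : u = 0 ∧ r = 0 := by constructor <;> nlinarith [sq_nonneg u, sq_nonneg r]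
    have habs : (fun v : ℝ => (v ^ 2 + 0 ^ 2) ^ (p / 2)) = fun v => |v| ^ p := by
      ext v
      rw [← sq_abs, ← Real.rpow_natCast, zero_pow two_ne_zero, add_zero,
        ← Real.rpow_mul (abs_nonneg v)]
      congr 1
      ring
    rw [habs]
    simpa using hasDerivAt_abs_rpow 0 hp
  · convert ((hasDerivAt_pow 2 u).add_const (r ^ 2)).rpow_const (p := p / 2) (Or.inl h) using 1
    rw [show p / 2 - 1 = (p - 2) / 2 by ring]
    push_cast
    ring

theorem HasDerivAt.tendsto_symmSecondDiff_right {f : ℝ → ℝ} {f' x : ℝ} (hf : HasDerivAt f f' x) :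
    Tendsto (fun s => (f (x - s) - 2 * f x + f (x + s)) / s) (𝓝[>] 0) (𝓝 0) := by
  have hsum : HasDerivAt (fun s => f (x - s) + f (x + s)) (-f' + f') 0 := by
    refine (HasDerivAt.comp_const_sub x 0 ?_).add (HasDerivAt.comp_const_add x 0 ?_) <;>
      simpa using hf
  rw [neg_add_cancel] at hsum
  refine hsum.tendsto_slope_zero_right.congr fun s => ?_
  simp only [zero_add, sub_zero, smul_eq_mul]
  ring_nf

theorem Function.Even.apply_abs {f : ℝ → ℝ} (hf : Function.Even f) (u : ℝ) : f |u| = f u := by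
  rcases abs_choice u with h | h <;> rw [h]
  exact hf u

namespace AddCircle

variable {T : ℝ} [hT : Fact (0 < T)]

theorem exists_eq_add_coe_mem_Ioc (a b : AddCircle T) :
    ∃ t ∈ Ioc (-(T / 2)) (T / 2), b = a + t := by
  have hmem := (equivIoc T (-(T / 2)) (b - a)).2
  exact ⟨_, ⟨hmem.1, by linarith [hmem.2]⟩, by rw [coe_equivIoc, add_sub_cancel]⟩

theorem tendsto_symmSecondDiff_dist {f f' : ℝ → ℝ} (hf : ∀ u, HasDerivAt f (f' u) u)
    (heven : Function.Even f) (a b : AddCircle T) :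
    Tendsto (fun s : ℝ => (f (dist (a + s) b) - 2 * f (dist a b) + f (dist (a + (-s : ℝ)) b)) / s)
      (𝓝[>] 0) (𝓝 (if b = a + (T / 2 : ℝ) then -2 * f' (T / 2) else 0)) := by
  obtain ⟨t, ht, rfl⟩ := exists_eq_add_coe_mem_Ioc a b
  set G : ℝ → ℝ := fun u => f ‖(u : AddCircle T)‖
  have hGf : ∀ u, |u| ≤ T / 2 → G u = f u := fun u hu => by
    show f ‖(u : AddCircle T)‖ = f u
    rw [(norm_coe_eq_abs_iff T hT.out.ne').2 (by rwa [abs_of_pos hT.out]), heven.apply_abs]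
  have hdist : ∀ s : ℝ, dist (a + s) (a + t) = ‖((t - s : ℝ) : AddCircle T)‖ := fun s => by
    rw [dist_comm, dist_eq_norm, add_sub_add_left_eq_sub, coe_sub]
  have hexpr : ∀ s : ℝ, (f (dist (a + s) (a + t)) - 2 * f (dist a (a + t)) +
      f (dist (a + (-s : ℝ)) (a + t))) / s = (G (t - s) - 2 * G t + G (t + s)) / s := fun s => by
    have h0 : dist a (a + t) = ‖(t : AddCircle T)‖ := by simp
    rw [hdist, hdist, h0, sub_neg_eq_add]
  simp_rw [hexpr]
  rcases ht.2.eq_or_lt with rfl | ht2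
  · rw [if_pos rfl]
    have hk : HasDerivAt (fun s => 2 * f (T / 2 - s)) (-2 * f' (T / 2)) 0 := by
      have h := HasDerivAt.comp_const_sub (T / 2) 0
        (by simpa using hf (T / 2) : HasDerivAt f (f' (T / 2)) (T / 2 - 0))
      simpa only [mul_neg, neg_mul] using h.const_mul (2 : ℝ)
    -- at the antipode both shifts bring `a` closer to `b`, to distance `T / 2 - s`
    refine hk.tendsto_slope_zero_right.congr' ?_
    filter_upwards [Ioo_mem_nhdsGT hT.out] with s hs
    have hperiodic : G (T / 2 + s) = G (T / 2 - s) := by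
      simp only [G]
      have hcoe : ((T / 2 + s : ℝ) : AddCircle T) = ((-(T / 2 - s) + T : ℝ) : AddCircle T) := by
        ring_nf
      rw [hcoe, coe_add_period, coe_neg, norm_neg]
    have hle : |T / 2 - s| ≤ T / 2 := abs_le.2 ⟨by linarith [hs.2], by linarith [hs.1]⟩
    rw [hperiodic, hGf _ hle, hGf _ (by rw [abs_of_pos (half_pos hT.out)])]
    simp only [smul_eq_mul, zero_add, sub_zero]
    ring
  · have hne : a + (t : AddCircle T) ≠ a + (T / 2 : ℝ) := by
      have hI : Ioc (-(T / 2)) (T / 2) = Ioc (-(T / 2)) (-(T / 2) + T) := by ring_nf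
      rw [Ne, add_right_inj, coe_eq_coe_iff_of_mem_Ioc (hI ▸ ht)
        (hI ▸ ⟨by linarith [hT.out], le_rfl⟩)]
      exact ht2.ne
    rw [if_neg hne]
    refine HasDerivAt.tendsto_symmSecondDiff_right ((hf t).congr_of_eventuallyEq ?_)
    filter_upwards [Icc_mem_nhds ht.1 ht2] with u hu
    exact hGf u (abs_le.2 hu)

end AddCircle

section Torus

variable {n : ℕ}

theorem torusShift_apply_self (x : Torus n) (j : Fin n) (s : ℝ) :
    torusShift x j s j = x j + s :=
  if_pos rfl

theorem torusShift_apply_of_ne (x : Torus n) {i j : Fin n} (h : i ≠ j) (s : ℝ) :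
    torusShift x j s i = x i :=
  if_neg h

theorem torusDistDrop_torusShift (x y : Torus n) (j : Fin n) (s : ℝ) :
    torusDistDrop j (torusShift x j s) y = torusDistDrop j x y := by
  unfold torusDistDrop
  congr 1
  exact Finset.sum_congr rfl fun i hi => by
    rw [torusShift_apply_of_ne x (Finset.ne_of_mem_erase hi)]

theorem torusDist_rpow_eq (p : ℝ) (x y : Torus n) (j : Fin n) :
    torusDist x y ^ p = (dist (x j) (y j) ^ 2 + torusDistDrop j x y ^ 2) ^ (p / 2) := by
  have hsum : 0 ≤ ∑ k, dist (x k) (y k) ^ 2 := by positivity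
  rw [torusDist, torusDistDrop, Real.sq_sqrt (by positivity),
    Finset.add_sum_erase _ (fun k => dist (x k) (y k) ^ 2) (Finset.mem_univ j),
    Real.sqrt_eq_rpow, ← Real.rpow_mul hsum]
  ring_nf

theorem torusDist_eq_dist_toLp (x y : Torus n) :
    torusDist x y = dist (WithLp.toLp 2 x) (WithLp.toLp 2 y) := by
  rw [PiLp.dist_eq_sum (by norm_num), torusDist, Real.sqrt_eq_rpow]
  norm_num

theorem continuous_torusDist (x : Torus n) : Continuous (torusDist x) := by
  simp_rw [funext (torusDist_eq_dist_toLp x)]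
  fun_prop

theorem torusDist_le_sqrt (x y : Torus n) : torusDist x y ≤ √n := by
  refine Real.sqrt_le_sqrt ?_
  calc ∑ k, dist (x k) (y k) ^ 2 ≤ ∑ _k : Fin n, (1 : ℝ) := by
        gcongr with k
        have h := AddCircle.norm_le_half_period 1 (x := x k - y k) one_ne_zero
        rw [← dist_eq_norm] at h
        nlinarith [dist_nonneg (x := x k) (y := y k)]
    _ = n := by simp

theorem abs_torusDist_torusShift_sub_le (x y : Torus n) (j : Fin n) (s : ℝ) :
    |torusDist (torusShift x j s) y - torusDist x y| ≤ |s| := by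
  rw [torusDist_eq_dist_toLp, torusDist_eq_dist_toLp]
  refine (abs_dist_sub_le _ _ _).trans ?_
  rw [← torusDist_eq_dist_toLp, torusDist, Finset.sum_eq_single j
    (fun k _ hk => by rw [torusShift_apply_of_ne x hk, dist_self, sq, mul_zero])
    (by simp), torusShift_apply_self, dist_eq_norm, add_sub_cancel_left,
    Real.sqrt_sq (norm_nonneg _), AddCircle.norm_eq]
  simpa using round_le s 0

end Torus

section SecondDifference

variable {n : ℕ}

noncomputable def torusDistSecondDiff (p : ℝ) (x : Torus n) (j : Fin n) (s : ℝ) (y : Torus n) :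
    ℝ :=
  (torusDist (torusShift x j s) y ^ p - 2 * torusDist x y ^ p +
    torusDist (torusShift x j (-s)) y ^ p) / s

theorem continuous_torusDist_rpow {p : ℝ} (hp : 0 ≤ p) (x : Torus n) :
    Continuous fun y => torusDist x y ^ p :=
  (continuous_torusDist x).rpow_const fun _ => Or.inr hp

theorem continuous_torusDistSecondDiff {p : ℝ} (hp : 0 ≤ p) (x : Torus n) (j : Fin n) (s : ℝ) :
    Continuous (torusDistSecondDiff p x j s) :=
  (((continuous_torusDist_rpow hp _).sub
    (continuous_const.mul (continuous_torusDist_rpow hp _))).add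
    (continuous_torusDist_rpow hp _)).div_const s

theorem torusPotential_secondDiff_eq_integral {p : ℝ} (hp : 0 ≤ p) (μ : Measure (Torus n))
    [IsFiniteMeasure μ] (x : Torus n) (j : Fin n) (s : ℝ) :
    (torusPotential p μ (torusShift x j s) - 2 * torusPotential p μ x +
      torusPotential p μ (torusShift x j (-s))) / s = ∫ y, torusDistSecondDiff p x j s y ∂μ := by
  have hint : ∀ z : Torus n, Integrable (fun y => torusDist z y ^ p) μ := fun z =>
    (continuous_torusDist_rpow hp z).integrable_of_hasCompactSupport
      (HasCompactSupport.of_compactSpace _)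
  have hint2 : Integrable (fun y => 2 * torusDist x y ^ p) μ := (hint x).const_mul 2
  have hint1 : Integrable
      (fun y => torusDist (torusShift x j s) y ^ p - 2 * torusDist x y ^ p) μ :=
    (hint _).sub hint2
  simp only [torusDistSecondDiff, torusPotential]
  rw [integral_div, integral_add hint1 (hint _), integral_sub (hint _) hint2, integral_const_mul]

theorem abs_torusDistSecondDiff_le {p : ℝ} (hp : 1 ≤ p) (x y : Torus n) (j : Fin n) {s : ℝ}
    (hs : 0 < s) : |torusDistSecondDiff p x j s y| ≤ 2 * (p * √n ^ (p - 1)) := by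
  have hdiff : ∀ t, |t| = s →
      |torusDist (torusShift x j t) y ^ p - torusDist x y ^ p| ≤ p * √n ^ (p - 1) * s := by
    intro t ht
    refine (abs_rpow_sub_rpow_le hp ⟨Real.sqrt_nonneg _, torusDist_le_sqrt _ _⟩
      ⟨Real.sqrt_nonneg _, torusDist_le_sqrt _ _⟩).trans ?_
    exact mul_le_mul_of_nonneg_left (ht ▸ abs_torusDist_torusShift_sub_le x y j t) (by positivity)
  rw [torusDistSecondDiff, abs_div, abs_of_pos hs, div_le_iff₀ hs]
  calc _ = |(torusDist (torusShift x j s) y ^ p - torusDist x y ^ p) +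
        (torusDist (torusShift x j (-s)) y ^ p - torusDist x y ^ p)| := by ring_nf
    _ ≤ _ := abs_add_le _ _
    _ ≤ _ := by
      linarith [hdiff s (abs_of_pos hs), hdiff (-s) (by rw [abs_neg, abs_of_pos hs])]

theorem tendsto_torusDistSecondDiff {p : ℝ} (hp : 1 < p) (x y : Torus n) (j : Fin n) :
    Tendsto (fun s => torusDistSecondDiff p x j s y) (𝓝[>] 0)
      (𝓝 ((torusHyperplane (torusShift x j (1 / 2)) j).indicator
        (fun y => -p * (1 / 4 + torusDistDrop j x y ^ 2) ^ ((p - 2) / 2)) y)) := by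
  set r := torusDistDrop j x y
  have hf := hasDerivAt_sq_add_sq_rpow hp r
  have heven : Function.Even fun u : ℝ => (u ^ 2 + r ^ 2) ^ (p / 2) := fun u => by simp
  convert AddCircle.tendsto_symmSecondDiff_dist hf heven (x j) (y j) using 2
  · simp only [torusDistSecondDiff, torusDist_rpow_eq p _ y j, torusDistDrop_torusShift,
      torusShift_apply_self, r]
  · simp only [indicator_apply, torusHyperplane, mem_ofPred_eq, torusShift_apply_self]
    split_ifs
    · norm_num
      ring
    · rfl

end SecondDifference

theorem torus_potential_second_difference_general {n : ℕ}
    {p : ℝ} (hp : 1 ≤ p) (hp1 : p ≠ 1)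
    (x : Torus n) (j : Fin n) (μ : Measure (Torus n)) (hμ : IsProbabilityMeasure μ) :
    Tendsto (fun s : ℝ =>
        (torusPotential p μ (torusShift x j s) - 2 * torusPotential p μ x +
          torusPotential p μ (torusShift x j (-s))) / s)
      (nhdsWithin 0 (Set.Ioi 0))
      (nhds (-p * ∫ y in torusHyperplane (torusShift x j (1 / 2)) j,
          (1 / 4 + torusDistDrop j x y ^ 2) ^ ((p - 2) / 2) ∂μ)) := by
  have hp' : 1 < p := lt_of_le_of_ne hp (Ne.symm hp1)
  have hp0 : 0 ≤ p := zero_le_one.trans hp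
  have hH : MeasurableSet (torusHyperplane (torusShift x j (1 / 2)) j) :=
    (isClosed_eq (continuous_apply j) continuous_const).measurableSet
  have hlim := tendsto_integral_filter_of_dominated_convergence (μ := μ) (l := 𝓝[>] 0)
    (fun _ => 2 * (p * √n ^ (p - 1)))
    (Eventually.of_forall fun s => (continuous_torusDistSecondDiff hp0 x j s).aestronglyMeasurable)
    (eventually_mem_nhdsWithin.mono fun s hs => ae_of_all _ fun y =>
      abs_torusDistSecondDiff_le hp x y j hs)
    (integrable_const _) (ae_of_all _ fun y => tendsto_torusDistSecondDiff hp' x y j)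
  rw [integral_indicator hH, integral_const_mul] at hlim
  exact hlim.congr fun s => (torusPotential_secondDiff_eq_integral hp0 μ x j s).symm

/-- Second-difference formula for the Wasserstein potential on the torus,
case `p ≥ 1`, `p ≠ 1`, `p ≠ 2`. -/
theorem torus_potential_second_difference {n : ℕ} (hn : 2 ≤ n)
    {p : ℝ} (hp : 1 ≤ p) (hp1 : p ≠ 1) (hp2 : p ≠ 2)
    (x : Torus n) (j : Fin n) (μ : Measure (Torus n)) (hμ : IsProbabilityMeasure μ) :
    Tendsto (fun s : ℝ =>
        (torusPotential p μ (torusShift x j s) - 2 * torusPotential p μ x +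
          torusPotential p μ (torusShift x j (-s))) / s)
      (nhdsWithin 0 (Set.Ioi 0))
      (nhds (-p * ∫ y in torusHyperplane (torusShift x j (1 / 2)) j,
          (1 / 4 + torusDistDrop j x y ^ 2) ^ ((p - 2) / 2) ∂μ)) :=
  torus_potential_second_difference_general hp hp1 x j μ hμ
end

section
/- Let n ≥ 1, x, z ∈ S^n with ∢(x,z) = π/2, and μ a Borel probability measure on S^n. Then lim_{s→0+} [T^1_μ(cos s · x + sin s · z) − 2 T^1_μ(x) + T^1_μ(cos s · x − sin s · z)]/s = 2 μ({x}) − 2 μ({−x}). -/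
open MeasureTheory Filter

/-- The `p`-Wasserstein potential of a measure on the sphere, evaluated at an
ambient vector `v`: `∫ arccos⟨v,y⟩^p dμ(y)`. -/
noncomputable def sphPotential {n : ℕ} (p : ℝ) (μ : MeasureTheory.Measure (Sph n))
    (v : EuclideanSpace ℝ (Fin (n + 1))) : ℝ :=
  ∫ y, Real.arccos (inner ℝ v (y : EuclideanSpace ℝ (Fin (n + 1)))) ^ p ∂μ

/-!
With `γ s = cos s • x + sin s • z`, the integrand is the symmetric second difference quotient of
`s ↦ ∠(γ s, y)`. Since `γ` is a unit-speed great circle, the triangle inequality for angles makes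
`s ↦ ∠(γ s, y)` 1-Lipschitz, so the quotients are bounded by `2` and dominated convergence
applies. Pointwise the limit is `0` whenever `⟪x, y⟫ ≠ ±1`, because then `s ↦ ∠(γ s, y)` is
differentiable at `0`; at `y = x` and `y = -x` the angle is `|s|` and `π - |s|`, giving `±2`.
-/

open MeasureTheory Filter Topology InnerProductGeometry RealInnerProductSpace

theorem Real.arccos_cos_le_abs (s : ℝ) : Real.arccos (Real.cos s) ≤ |s| := by
  rcases le_or_gt |s| Real.pi with h | h
  · rw [← Real.cos_abs, Real.arccos_cos (abs_nonneg s) h]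
  · exact (Real.arccos_le_pi _).trans h.le

theorem HasDerivAt.tendsto_second_difference_div {f : ℝ → ℝ} {f' a : ℝ} (hf : HasDerivAt f f' a) :
    Tendsto (fun t => (f (a + t) - 2 * f a + f (a - t)) / t) (𝓝[≠] 0) (𝓝 0) := by
  have hforward := hasDerivAt_iff_tendsto_slope_zero.mp hf
  have hbackward := hasDerivAt_iff_tendsto_slope_zero.mp
    (HasDerivAt.comp_const_sub a 0 (by rwa [sub_zero]))
  convert hforward.add hbackward using 1
  · ext t
    simp only [smul_eq_mul, zero_add, sub_zero]
    ring
  · simp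

section GreatCircle

variable {V : Type*} [NormedAddCommGroup V] [InnerProductSpace ℝ V]

noncomputable def greatCircle (x z : V) (s : ℝ) : V := Real.cos s • x + Real.sin s • z

noncomputable def angleSecondDiffQuot (x z y : V) (s : ℝ) : ℝ :=
  (angle (greatCircle x z s) y - 2 * angle x y + angle (greatCircle x z (-s)) y) / s

@[simp]
theorem greatCircle_zero (x z : V) : greatCircle x z 0 = x := by
  simp [greatCircle]

theorem greatCircle_neg (x z : V) (s : ℝ) :
    greatCircle x z (-s) = Real.cos s • x - Real.sin s • z := by
  simp [greatCircle, sub_eq_add_neg]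

theorem inner_greatCircle_left (x z y : V) (s : ℝ) :
    ⟪greatCircle x z s, y⟫ = Real.cos s * ⟪x, y⟫ + Real.sin s * ⟪z, y⟫ := by
  simp only [greatCircle, inner_add_left, real_inner_smul_left]

theorem norm_greatCircle {x z : V} (hx : ‖x‖ = 1) (hz : ‖z‖ = 1) (hxz : ⟪x, z⟫ = 0) (s : ℝ) :
    ‖greatCircle x z s‖ = 1 := by
  have hsq : ‖greatCircle x z s‖ ^ 2 = 1 := by
    rw [greatCircle, norm_add_sq_real, inner_smul_left, inner_smul_right, hxz, norm_smul,
      norm_smul, hx, hz, Real.norm_eq_abs, Real.norm_eq_abs]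
    simp only [mul_one, mul_zero, add_zero, sq_abs, RCLike.conj_to_real]
    exact Real.cos_sq_add_sin_sq s
  exact (pow_eq_one_iff_of_nonneg (norm_nonneg _) two_ne_zero).mp hsq

theorem angle_greatCircle_left {x z : V} (hx : ‖x‖ = 1) (hz : ‖z‖ = 1) (hxz : ⟪x, z⟫ = 0)
    (s : ℝ) : angle (greatCircle x z s) x = Real.arccos (Real.cos s) := by
  rw [angle, inner_greatCircle_left, real_inner_self_eq_norm_sq, real_inner_comm, hxz,
    norm_greatCircle hx hz hxz, hx]
  simp

theorem abs_angle_greatCircle_sub_angle_le {x z : V} (hx : ‖x‖ = 1) (hz : ‖z‖ = 1)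
    (hxz : ⟪x, z⟫ = 0) (s : ℝ) (y : V) :
    |angle (greatCircle x z s) y - angle x y| ≤ |s| := by
  have hstep : angle (greatCircle x z s) x ≤ |s| :=
    (angle_greatCircle_left hx hz hxz s).trans_le (Real.arccos_cos_le_abs s)
  have h₁ := angle_le_angle_add_angle (greatCircle x z s) x y
  have h₂ := angle_le_angle_add_angle x (greatCircle x z s) y
  rw [angle_comm x (greatCircle x z s)] at h₂
  rw [abs_le]
  constructor <;> linarith

theorem abs_angleSecondDiffQuot_le {x z : V} (hx : ‖x‖ = 1) (hz : ‖z‖ = 1) (hxz : ⟪x, z⟫ = 0)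
    (y : V) {s : ℝ} (hs : 0 < s) : |angleSecondDiffQuot x z y s| ≤ 2 := by
  have hplus := abs_angle_greatCircle_sub_angle_le hx hz hxz s y
  have hminus := abs_angle_greatCircle_sub_angle_le hx hz hxz (-s) y
  rw [abs_of_pos hs] at hplus
  rw [abs_neg, abs_of_pos hs] at hminus
  rw [angleSecondDiffQuot, abs_div, abs_of_pos hs, div_le_iff₀ hs]
  calc _ = |(angle (greatCircle x z s) y - angle x y) +
          (angle (greatCircle x z (-s)) y - angle x y)| := by congr 1; ring
    _ ≤ _ := abs_add_le _ _
    _ ≤ 2 * s := by linarith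

theorem tendsto_angleSecondDiffQuot_self {x z : V} (hx : ‖x‖ = 1) (hz : ‖z‖ = 1)
    (hxz : ⟪x, z⟫ = 0) : Tendsto (angleSecondDiffQuot x z x) (𝓝[>] 0) (𝓝 2) := by
  refine tendsto_const_nhds.congr' ?_
  filter_upwards [Ioc_mem_nhdsGT Real.pi_pos] with s hs
  rw [angleSecondDiffQuot, angle_greatCircle_left hx hz hxz, angle_greatCircle_left hx hz hxz,
    Real.cos_neg, Real.arccos_cos hs.1.le hs.2, angle_self (norm_ne_zero_iff.mp (by simp [hx]))]
  rw [eq_div_iff hs.1.ne']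
  ring

theorem tendsto_angleSecondDiffQuot_neg {x z : V} (hx : ‖x‖ = 1) (hz : ‖z‖ = 1)
    (hxz : ⟪x, z⟫ = 0) : Tendsto (angleSecondDiffQuot x z (-x)) (𝓝[>] 0) (𝓝 (-2)) := by
  refine tendsto_const_nhds.congr' ?_
  filter_upwards [Ioc_mem_nhdsGT Real.pi_pos] with s hs
  rw [angleSecondDiffQuot, angle_neg_right, angle_neg_right, angle_neg_right,
    angle_greatCircle_left hx hz hxz, angle_greatCircle_left hx hz hxz, Real.cos_neg,
    Real.arccos_cos hs.1.le hs.2, angle_self (norm_ne_zero_iff.mp (by simp [hx]))]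
  rw [eq_div_iff hs.1.ne']
  ring

theorem tendsto_angleSecondDiffQuot_of_ne {x z y : V} (hx : ‖x‖ = 1) (hz : ‖z‖ = 1)
    (hxz : ⟪x, z⟫ = 0) (hy : ‖y‖ = 1) (hyx : y ≠ x) (hyx' : y ≠ -x) :
    Tendsto (angleSecondDiffQuot x z y) (𝓝[>] 0) (𝓝 0) := by
  have hangle : (fun s => angle (greatCircle x z s) y) =
      fun s => Real.arccos (Real.cos s * ⟪x, y⟫ + Real.sin s * ⟪z, y⟫) := by
    ext s
    rw [angle, inner_greatCircle_left, norm_greatCircle hx hz hxz, hy, mul_one, div_one]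
  have hne_one : ⟪x, y⟫ ≠ 1 := fun h => hyx ((inner_eq_one_iff_of_norm_eq_one hx hy).mp h).symm
  have hne_neg_one : ⟪x, y⟫ ≠ -1 := fun h =>
    hyx' ((inner_eq_one_iff_of_norm_eq_one (𝕜 := ℝ) (by rwa [norm_neg]) hy).mp
      (by rw [inner_neg_left, h, neg_neg])).symm
  have hdiff : DifferentiableAt ℝ (fun s => angle (greatCircle x z s) y) 0 := by
    rw [hangle]
    exact (Real.differentiableAt_arccos.mpr ⟨by simpa, by simpa⟩).comp 0 (by fun_prop)
  have hlim := hdiff.hasDerivAt.tendsto_second_difference_div.mono_left (nhdsGT_le_nhdsNE 0)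
  simp only [zero_add, zero_sub, greatCircle_zero] at hlim
  exact hlim

theorem tendsto_angleSecondDiffQuot_unitSphere {x z : Metric.sphere (0 : V) 1}
    (hxz : ⟪(x : V), z⟫ = 0) (y : Metric.sphere (0 : V) 1) :
    Tendsto (angleSecondDiffQuot (x : V) z y) (𝓝[>] 0)
      (𝓝 (({x} : Set (Metric.sphere (0 : V) 1)).indicator (fun _ => 2) y +
        ({-x} : Set (Metric.sphere (0 : V) 1)).indicator (fun _ => -2) y)) := by
  have hx := norm_eq_of_mem_sphere x
  have hz := norm_eq_of_mem_sphere z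
  have hx_ne := ne_neg_of_mem_unit_sphere ℝ x
  by_cases hyx : y = x
  · subst hyx
    simpa [hx_ne] using tendsto_angleSecondDiffQuot_self hx hz hxz
  by_cases hyx' : y = -x
  · subst hyx'
    simpa [hx_ne.symm, coe_neg_sphere] using tendsto_angleSecondDiffQuot_neg hx hz hxz
  simpa [hyx, hyx'] using tendsto_angleSecondDiffQuot_of_ne hx hz hxz (norm_eq_of_mem_sphere y)
    (fun h => hyx (Subtype.ext h)) (fun h => hyx' (Subtype.ext (by rw [h, coe_neg_sphere])))

end GreatCircle

section UnitSphere

variable {V : Type*} [NormedAddCommGroup V] [InnerProductSpace ℝ V] [MeasurableSpace V]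
  [BorelSpace V]

theorem integrable_angle_unitSphere (μ : Measure (Metric.sphere (0 : V) 1)) [IsFiniteMeasure μ]
    (v : V) :
    Integrable (fun y : Metric.sphere (0 : V) 1 => angle v (y : V)) μ := by
  refine Integrable.of_bound (Measurable.aestronglyMeasurable (by unfold angle; fun_prop)) Real.pi
    (ae_of_all _ fun y => ?_)
  rw [Real.norm_eq_abs, abs_of_nonneg (angle_nonneg _ _)]
  exact angle_le_pi _ _

theorem tendsto_integral_angleSecondDiffQuot (μ : Measure (Metric.sphere (0 : V) 1))
    [IsFiniteMeasure μ] {x z : Metric.sphere (0 : V) 1} (hxz : ⟪(x : V), z⟫ = 0) :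
    Tendsto (fun s => ∫ y, angleSecondDiffQuot (x : V) z y s ∂μ)
      (𝓝[>] 0) (𝓝 (2 * μ.real {x} - 2 * μ.real {-x})) := by
  have hlimit : ∫ y, (({x} : Set (Metric.sphere (0 : V) 1)).indicator (fun _ => 2) y +
      ({-x} : Set (Metric.sphere (0 : V) 1)).indicator (fun _ => -2) y) ∂μ
      = 2 * μ.real {x} - 2 * μ.real {-x} := by
    rw [integral_add ((integrable_const _).indicator (measurableSet_singleton _))
      ((integrable_const _).indicator (measurableSet_singleton _)),
      integral_indicator_const _ (measurableSet_singleton _),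
      integral_indicator_const _ (measurableSet_singleton _)]
    simp only [smul_eq_mul]
    ring
  rw [← hlimit]
  refine tendsto_integral_filter_of_dominated_convergence (fun _ => 2) ?_ ?_
    (integrable_const 2) (ae_of_all _ (tendsto_angleSecondDiffQuot_unitSphere hxz))
  · exact Eventually.of_forall fun s =>
      Measurable.aestronglyMeasurable (by unfold angleSecondDiffQuot angle; fun_prop)
  · filter_upwards [self_mem_nhdsWithin] with s hs
    exact ae_of_all _ fun y => abs_angleSecondDiffQuot_le (norm_eq_of_mem_sphere x)
      (norm_eq_of_mem_sphere z) hxz y hs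

end UnitSphere

section Sphere

variable {n : ℕ}

theorem sphAngle_eq_angle (x y : Sph n) :
    sphAngle x y = angle (x : EuclideanSpace ℝ (Fin (n + 1))) y := by
  simp only [sphAngle, angle, norm_eq_of_mem_sphere, mul_one, div_one]

theorem sphPotential_one_eq_integral_angle (μ : Measure (Sph n))
    {v : EuclideanSpace ℝ (Fin (n + 1))} (hv : ‖v‖ = 1) :
    sphPotential 1 μ v = ∫ y, angle v (y : EuclideanSpace ℝ (Fin (n + 1))) ∂μ := by
  simp only [sphPotential, Real.rpow_one, angle, hv, norm_eq_of_mem_sphere, mul_one, div_one]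

theorem sphPotential_second_difference_div_eq_integral (μ : Measure (Sph n))
    [IsFiniteMeasure μ] {x z : Sph n} (hxz : ⟪(x : EuclideanSpace ℝ (Fin (n + 1))), z⟫ = 0)
    (s : ℝ) :
    (sphPotential 1 μ (Real.cos s • (x : EuclideanSpace ℝ (Fin (n + 1))) + Real.sin s • z) -
        2 * sphPotential 1 μ x +
        sphPotential 1 μ (Real.cos s • (x : EuclideanSpace ℝ (Fin (n + 1))) - Real.sin s • z)) / s =
      ∫ y, angleSecondDiffQuot (x : EuclideanSpace ℝ (Fin (n + 1))) z y s ∂μ := by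
  have hx := norm_eq_of_mem_sphere x
  have hz := norm_eq_of_mem_sphere z
  have hint (v : EuclideanSpace ℝ (Fin (n + 1))) := integrable_angle_unitSphere μ v
  rw [← greatCircle_neg, ← greatCircle,
    sphPotential_one_eq_integral_angle μ (norm_greatCircle hx hz hxz s),
    sphPotential_one_eq_integral_angle μ hx,
    sphPotential_one_eq_integral_angle μ (norm_greatCircle hx hz hxz (-s))]
  simp only [angleSecondDiffQuot]
  rw [integral_div, integral_add, integral_sub, integral_const_mul]
  · exact hint _
  · exact (hint _).const_mul 2
  · exact (hint _).sub ((hint _).const_mul 2)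
  · exact hint _

end Sphere

theorem sphere_potential_second_difference_one_general {n : ℕ}
    (x z : Sph n) (hxz : sphAngle x z = Real.pi / 2)
    (μ : Measure (Sph n)) (hμ : IsProbabilityMeasure μ) :
    Tendsto (fun s : ℝ =>
        (sphPotential 1 μ (Real.cos s • (x : EuclideanSpace ℝ (Fin (n + 1))) +
            Real.sin s • (z : EuclideanSpace ℝ (Fin (n + 1)))) -
          2 * sphPotential 1 μ (x : EuclideanSpace ℝ (Fin (n + 1))) +
          sphPotential 1 μ (Real.cos s • (x : EuclideanSpace ℝ (Fin (n + 1))) -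
            Real.sin s • (z : EuclideanSpace ℝ (Fin (n + 1))))) / s)
      (nhdsWithin 0 (Set.Ioi 0))
      (nhds (2 * (μ {x}).toReal - 2 * (μ {-x}).toReal)) := by
  have horth : ⟪(x : EuclideanSpace ℝ (Fin (n + 1))), z⟫ = 0 :=
    (inner_eq_zero_iff_angle_eq_pi_div_two _ _).mpr (sphAngle_eq_angle x z ▸ hxz)
  simp only [sphPotential_second_difference_div_eq_integral μ horth, ← measureReal_def]
  exact tendsto_integral_angleSecondDiffQuot μ horth

/-- Second-difference formula for the Wasserstein potential on the sphere,
case `p = 1`. -/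
theorem sphere_potential_second_difference_one {n : ℕ} (hn : 1 ≤ n)
    (x z : Sph n) (hxz : sphAngle x z = Real.pi / 2)
    (μ : Measure (Sph n)) (hμ : IsProbabilityMeasure μ) :
    Tendsto (fun s : ℝ =>
        (sphPotential 1 μ (Real.cos s • (x : EuclideanSpace ℝ (Fin (n + 1))) +
            Real.sin s • (z : EuclideanSpace ℝ (Fin (n + 1)))) -
          2 * sphPotential 1 μ (x : EuclideanSpace ℝ (Fin (n + 1))) +
          sphPotential 1 μ (Real.cos s • (x : EuclideanSpace ℝ (Fin (n + 1))) -
            Real.sin s • (z : EuclideanSpace ℝ (Fin (n + 1))))) / s)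
      (nhdsWithin 0 (Set.Ioi 0))
      (nhds (2 * (μ {x}).toReal - 2 * (μ {-x}).toReal)) :=
  sphere_potential_second_difference_one_general x z hxz μ hμ
end

section
/- Let Φ be an isometry of W_2(T^n) (n ≥ 2) fixing all Dirac measures. Then Φ preserves all hyperplane masses: Φ(μ)(H(z,j)) = μ(H(z,j)) for every μ ∈ W_2(T^n), every z ∈ T^n and j ∈ {1,...,n}, where H(z,j) = {y ∈ T^n : y_j = z_j}. Consequently, Φ preserves the one-dimensional marginals: (p_j)_# Φ(μ) = (p_j)_# μ for the coordinate projection p_j : T^n → T. -/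
open MeasureTheory Filter

/-!
Against a Dirac mass the only coupling is the product one, so `W₂(μ, δₓ)² = ∫ ϱ(y, x)² dμ(y)`, and
an isometry fixing Dirac masses preserves this potential of `μ`. As `ϱ²` is a sum of squared
coordinate distances, the potential is `∑ₖ Gₖ(xₖ)` with `Gₖ(t) = ∫ d(s, t)² d(pₖ)_#μ(s)` the
potential of the `k`-th marginal on the circle; hence each `Gₖ` is preserved up to an additive
constant, which vanishes because all such potentials have the same Haar average.

On the circle `ℝ/Tℤ` the second difference of `t ↦ d(s, t)²` with step `ε ≤ T/4` is
`2ε² - 2T·max (ε - d(s, t + T/2)) 0`, so `G` determines the integrals of all narrow tent functions.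
Convolving a continuous function with a narrow tent approximates it uniformly, so these integrals
determine the measure. Hyperplane masses are point masses of the marginals.
-/

open Topology

theorem Continuous.integrable_of_compactSpace {X : Type*} [TopologicalSpace X] [CompactSpace X]
    [MeasurableSpace X] [OpensMeasurableSpace X] {μ : Measure X} [IsFiniteMeasure μ]
    {f : X → ℝ} (hf : Continuous f) : Integrable f μ :=
  (BoundedContinuousFunction.mkOfCompact ⟨f, hf⟩).integrable μ

theorem sub_eq_sub_of_forall_sum_apply_eq {ι α M : Type*} [Fintype ι] [DecidableEq ι]
    [AddCommGroup M] {f g : ι → α → M} (h : ∀ x : ι → α, ∑ k, f k (x k) = ∑ k, g k (x k))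
    (x : ι → α) (j : ι) (t : α) : f j t - g j t = f j (x j) - g j (x j) := by
  have hx := h x
  have ht := h (Function.update x j t)
  simp only [Function.apply_update f, Function.apply_update g,
    Finset.sum_update_of_mem (Finset.mem_univ j)] at ht
  rw [Finset.sum_eq_add_sum_sdiff_singleton_of_mem (Finset.mem_univ j),
    Finset.sum_eq_add_sum_sdiff_singleton_of_mem (Finset.mem_univ j) (fun k => g k (x k))] at hx
  linear_combination (norm := module) ht - hx

section Tent

variable {G : Type*} [NormedAddCommGroup G] [MeasurableSpace G] [BorelSpace G]

theorem integral_comp_dist_eq {E : Type*} [NormedAddCommGroup E] [NormedSpace ℝ E]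
    (m : Measure G) [m.IsAddRightInvariant] (φ : ℝ → E) (s : G) :
    ∫ a, φ (dist s a) ∂m = ∫ u, φ ‖u‖ ∂m := by
  simp only [dist_comm s, dist_eq_norm]
  exact integral_sub_right_eq_self (fun u => φ ‖u‖) s

variable [CompactSpace G]

theorem integral_max_sub_norm_pos (m : Measure G) [IsFiniteMeasure m] [m.IsOpenPosMeasure]
    {ε : ℝ} (hε : 0 < ε) : 0 < ∫ u, max (ε - ‖u‖) 0 ∂m := by
  rw [integral_pos_iff_support_of_nonneg (f := fun u : G => max (ε - ‖u‖) 0)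
    (fun u => le_max_right _ _)
    (by fun_prop : Continuous fun u : G => max (ε - ‖u‖) 0).integrable_of_compactSpace]
  refine (Metric.measure_ball_pos m 0 hε).trans_le (measure_mono fun u hu => ?_)
  rw [mem_ball_zero_iff] at hu
  exact (lt_max_of_lt_left (sub_pos.2 hu)).ne'

theorem integral_integral_mul_max_sub_dist (ρ m : Measure G) [IsFiniteMeasure ρ]
    [IsFiniteMeasure m] {f : G → ℝ} (hf : Continuous f) (ε : ℝ) :
    ∫ s, ∫ a, f a * max (ε - dist s a) 0 ∂m ∂ρ = ∫ a, f a * ∫ s, max (ε - dist s a) 0 ∂ρ ∂m := by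
  rw [integral_integral_swap (by fun_prop : Continuous fun q : G × G =>
    f q.2 * max (ε - dist q.1 q.2) 0).integrable_of_compactSpace]
  simp only [integral_const_mul]

theorem abs_integral_mul_max_sub_dist_sub_le (m : Measure G) [IsFiniteMeasure m]
    [m.IsAddRightInvariant] {f : G → ℝ} (hf : Continuous f) {ε δ : ℝ} {s : G}
    (hmod : ∀ a, dist s a ≤ ε → |f s - f a| ≤ δ) :
    |∫ a, f a * max (ε - dist s a) 0 ∂m - (∫ u, max (ε - ‖u‖) 0 ∂m) * f s|
      ≤ δ * ∫ u, max (ε - ‖u‖) 0 ∂m := by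
  have hpt : ∀ a, |f a * max (ε - dist s a) 0 - max (ε - dist s a) 0 * f s|
      ≤ δ * max (ε - dist s a) 0 := by
    intro a
    rw [show f a * max (ε - dist s a) 0 - max (ε - dist s a) 0 * f s
        = max (ε - dist s a) 0 * (f a - f s) by ring,
      abs_mul, abs_of_nonneg (le_max_right _ _), abs_sub_comm, mul_comm]
    rcases le_or_gt (dist s a) ε with hsa | hsa
    · exact mul_le_mul_of_nonneg_right (hmod a hsa) (le_max_right _ _)
    · simp [max_eq_right (sub_nonpos.2 hsa.le)]
  rw [← integral_comp_dist_eq m (fun r => max (ε - r) 0) s, ← integral_mul_const, ← integral_sub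
    (by fun_prop : Continuous fun a => f a * max (ε - dist s a) 0).integrable_of_compactSpace
    (by fun_prop : Continuous fun a => max (ε - dist s a) 0 * f s).integrable_of_compactSpace,
    ← integral_const_mul]
  exact norm_integral_le_of_norm_le
    (by fun_prop : Continuous fun a => δ * max (ε - dist s a) 0).integrable_of_compactSpace
    (ae_of_all _ fun a => (Real.norm_eq_abs _).trans_le (hpt a))

theorem abs_integral_integral_mul_max_sub_dist_sub_le (ρ m : Measure G) [IsFiniteMeasure ρ]
    [IsFiniteMeasure m] [m.IsAddRightInvariant] {f : G → ℝ} (hf : Continuous f) {ε δ : ℝ}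
    (hmod : ∀ s a, dist s a ≤ ε → |f s - f a| ≤ δ) :
    |∫ s, ∫ a, f a * max (ε - dist s a) 0 ∂m ∂ρ - (∫ u, max (ε - ‖u‖) 0 ∂m) * ∫ s, f s ∂ρ|
      ≤ δ * (∫ u, max (ε - ‖u‖) 0 ∂m) * ρ.real Set.univ := by
  have hK : Integrable (fun s => ∫ a, f a * max (ε - dist s a) 0 ∂m) ρ :=
    (by fun_prop : Continuous fun q : G × G =>
      f q.2 * max (ε - dist q.1 q.2) 0).integrable_of_compactSpace.integral_prod_left
  rw [← integral_const_mul, ← integral_sub hK (hf.integrable_of_compactSpace.const_mul _)]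
  calc _ ≤ ∫ _, δ * ∫ u, max (ε - ‖u‖) 0 ∂m ∂ρ :=
        norm_integral_le_of_norm_le (integrable_const _) (ae_of_all _ fun s =>
          (Real.norm_eq_abs _).trans_le (abs_integral_mul_max_sub_dist_sub_le m hf (hmod s)))
    _ = _ := by rw [integral_const, smul_eq_mul, mul_comm]

theorem integral_eq_of_forall_integral_max_sub_dist_eq {ν ν' : Measure G} [IsFiniteMeasure ν]
    [IsFiniteMeasure ν']
    (h : ∀ᶠ ε in 𝓝[>] 0, ∀ a, ∫ s, max (ε - dist s a) 0 ∂ν = ∫ s, max (ε - dist s a) 0 ∂ν')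
    {f : G → ℝ} (hf : Continuous f) : ∫ s, f s ∂ν = ∫ s, f s ∂ν' := by
  set M := ν.real Set.univ + ν'.real Set.univ
  suffices hδ : ∀ δ > 0, |∫ s, f s ∂ν - ∫ s, f s ∂ν'| ≤ δ * M by
    have hlim : Tendsto (fun δ => δ * M) (𝓝[>] 0) (𝓝 0) := by
      simpa using tendsto_nhdsWithin_of_tendsto_nhds ((continuous_mul_const M).tendsto 0)
    exact sub_eq_zero.1 (abs_nonpos_iff.1 (ge_of_tendsto hlim (eventually_nhdsWithin_of_forall hδ)))
  intro δ hδ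
  obtain ⟨ε₀, hε₀, hmod⟩ := Metric.uniformContinuous_iff.1
    (CompactSpace.uniformContinuous_of_continuous hf) δ hδ
  obtain ⟨ε, htent, hε, hεε₀⟩ := (h.and (Ioo_mem_nhdsGT hε₀)).exists
  have hmod' : ∀ s a, dist s a ≤ ε → |f s - f a| ≤ δ := fun s a hsa =>
    (hmod (hsa.trans_lt hεε₀)).le
  let m : Measure G := Measure.addHaar
  have hc := integral_max_sub_norm_pos m hε
  have hν := abs_integral_integral_mul_max_sub_dist_sub_le ν m hf hmod'
  have hν' := abs_integral_integral_mul_max_sub_dist_sub_le ν' m hf hmod'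
  rw [integral_integral_mul_max_sub_dist ν m hf] at hν
  rw [integral_integral_mul_max_sub_dist ν' m hf] at hν'
  simp only [htent] at hν
  set c := ∫ u, max (ε - ‖u‖) 0 ∂m
  set K := ∫ a, f a * ∫ s, max (ε - dist s a) 0 ∂ν' ∂m
  refine le_of_mul_le_mul_left ?_ hc
  calc c * |∫ s, f s ∂ν - ∫ s, f s ∂ν'|
      = |(K - c * ∫ s, f s ∂ν') - (K - c * ∫ s, f s ∂ν)| := by
        rw [show (K - c * ∫ s, f s ∂ν') - (K - c * ∫ s, f s ∂ν)
          = c * (∫ s, f s ∂ν - ∫ s, f s ∂ν') by ring, abs_mul, abs_of_pos hc]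
    _ ≤ c * (δ * M) := (abs_sub _ _).trans (by linarith)

theorem MeasureTheory.Measure.ext_of_forall_integral_max_sub_dist_eq {ν ν' : Measure G}
    [IsFiniteMeasure ν] [IsFiniteMeasure ν']
    (h : ∀ᶠ ε in 𝓝[>] 0, ∀ a, ∫ s, max (ε - dist s a) 0 ∂ν = ∫ s, max (ε - dist s a) 0 ∂ν') :
    ν = ν' :=
  ext_of_forall_integral_eq_of_IsFiniteMeasure fun f =>
    integral_eq_of_forall_integral_max_sub_dist_eq h f.continuous

end Tent

noncomputable def meanSqDist {X : Type*} [PseudoMetricSpace X] [MeasurableSpace X]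
    (ν : Measure X) (t : X) : ℝ :=
  ∫ s, dist s t ^ 2 ∂ν

namespace AddCircle

variable {T : ℝ}

theorem neg_coe_half_period : -((T / 2 : ℝ) : AddCircle T) = ((T / 2 : ℝ) : AddCircle T) := by
  rw [neg_eq_iff_add_eq_zero, ← coe_add, add_halves, coe_period]

variable [hT : Fact (0 < T)]

theorem norm_coe_of_abs_le {x : ℝ} (hx : |x| ≤ T / 2) : ‖(x : AddCircle T)‖ = |x| :=
  (norm_coe_eq_abs_iff T hT.out.ne').2 (by rwa [abs_of_pos hT.out])

theorem norm_sq_second_diff_of_nonneg {x ε : ℝ} (hx₀ : 0 ≤ x) (hx : x ≤ T / 2) (hε₀ : 0 ≤ ε)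
    (hε : ε ≤ T / 4) :
    ‖(x : AddCircle T) - ε‖ ^ 2 + ‖(x : AddCircle T) + ε‖ ^ 2 - 2 * ‖(x : AddCircle T)‖ ^ 2
      = 2 * ε ^ 2 - 2 * T * max (ε - ‖(x : AddCircle T) + ((T / 2 : ℝ) : AddCircle T)‖) 0 := by
  have hT₀ := hT.out
  rw [← coe_sub, ← coe_add, ← coe_add, show x + T / 2 = x - T / 2 + T by ring, coe_add_period,
    norm_coe_of_abs_le (x := x - ε) (abs_le.2 ⟨by linarith, by linarith⟩),
    norm_coe_of_abs_le (x := x) (abs_le.2 ⟨by linarith, by linarith⟩),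
    norm_coe_of_abs_le (x := x - T / 2) (abs_le.2 ⟨by linarith, by linarith⟩),
    abs_of_nonpos (by linarith : x - T / 2 ≤ 0)]
  rcases le_or_gt (x + ε) (T / 2) with hxε | hxε
  · rw [norm_coe_of_abs_le (abs_le.2 ⟨by linarith, hxε⟩), max_eq_right (by linarith)]
    simp only [sq_abs]
    ring
  · rw [show x + ε = x + ε - T + T by ring, coe_add_period,
      norm_coe_of_abs_le (abs_le.2 ⟨by linarith, by linarith⟩), max_eq_left (by linarith)]
    simp only [sq_abs]
    ring

theorem norm_sq_second_diff (u : AddCircle T) {ε : ℝ} (hε₀ : 0 ≤ ε) (hε : ε ≤ T / 4) :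
    ‖u - ε‖ ^ 2 + ‖u + ε‖ ^ 2 - 2 * ‖u‖ ^ 2
      = 2 * ε ^ 2 - 2 * T * max (ε - ‖u + ((T / 2 : ℝ) : AddCircle T)‖) 0 := by
  obtain ⟨x, hx, rfl⟩ : ∃ x : ℝ, |x| ≤ T / 2 ∧ (x : AddCircle T) = u := by
    refine ⟨equivIco T (-(T / 2)) u, ?_, coe_equivIco⟩
    obtain ⟨h₁, h₂⟩ := (equivIco T (-(T / 2)) u).2
    exact abs_le.2 ⟨h₁, by linarith⟩
  rcases le_total 0 x with hx₀ | hx₀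
  · exact norm_sq_second_diff_of_nonneg hx₀ (le_of_abs_le hx) hε₀ hε
  · have h := norm_sq_second_diff_of_nonneg (x := -x) (neg_nonneg.2 hx₀)
      (neg_le.1 (neg_abs_le x |>.trans' (by linarith))) hε₀ hε
    have hsub : ‖-(x : AddCircle T) - ε‖ = ‖(x : AddCircle T) + ε‖ := by
      rw [← norm_neg]; congr 1; abel
    have hadd : ‖-(x : AddCircle T) + ε‖ = ‖(x : AddCircle T) - ε‖ := by
      rw [← norm_neg]; congr 1; abel
    have hhalf : ‖-(x : AddCircle T) + ((T / 2 : ℝ) : AddCircle T)‖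
        = ‖(x : AddCircle T) + ((T / 2 : ℝ) : AddCircle T)‖ := by
      rw [← norm_neg, neg_add, neg_neg, neg_coe_half_period]
    rw [coe_neg, hsub, hadd, norm_neg, hhalf] at h
    linarith

theorem dist_sq_second_diff (s t : AddCircle T) {ε : ℝ} (hε₀ : 0 ≤ ε) (hε : ε ≤ T / 4) :
    dist s (t + ε) ^ 2 + dist s (t - ε) ^ 2 - 2 * dist s t ^ 2
      = 2 * ε ^ 2 - 2 * T * max (ε - dist s (t + ((T / 2 : ℝ) : AddCircle T))) 0 := by
  have hhalf : s - (t + ((T / 2 : ℝ) : AddCircle T)) = s - t + ((T / 2 : ℝ) : AddCircle T) := by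
    rw [sub_add_eq_sub_sub, sub_eq_add_neg (s - t), neg_coe_half_period]
  rw [dist_eq_norm, dist_eq_norm, dist_eq_norm, dist_eq_norm, hhalf, sub_add_eq_sub_sub,
    show s - (t - ε) = s - t + ε by abel]
  exact norm_sq_second_diff (s - t) hε₀ hε

theorem meanSqDist_second_diff (ν : Measure (AddCircle T)) [IsProbabilityMeasure ν]
    (t : AddCircle T) {ε : ℝ} (hε₀ : 0 ≤ ε) (hε : ε ≤ T / 4) :
    meanSqDist ν (t + ε) + meanSqDist ν (t - ε) - 2 * meanSqDist ν t
      = 2 * ε ^ 2 - 2 * T * ∫ s, max (ε - dist s (t + ((T / 2 : ℝ) : AddCircle T))) 0 ∂ν := by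
  have hint : ∀ a : AddCircle T, Integrable (fun s => dist s a ^ 2) ν := fun a =>
    (by fun_prop : Continuous fun s => dist s a ^ 2).integrable_of_compactSpace
  calc _ = ∫ s, (dist s (t + ε) ^ 2 + dist s (t - ε) ^ 2 - 2 * dist s t ^ 2) ∂ν := by
        rw [integral_sub, integral_add (hint _) (hint _), integral_const_mul]
        · rfl
        exacts [(hint _).add (hint _), (hint _).const_mul 2]
    _ = _ := integral_congr_ae (ae_of_all _ fun s => dist_sq_second_diff s t hε₀ hε)
    _ = _ := by
        have htent : Integrable
            (fun s => max (ε - dist s (t + ((T / 2 : ℝ) : AddCircle T))) 0) ν :=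
          (by fun_prop : Continuous _).integrable_of_compactSpace
        rw [integral_sub (integrable_const _) (htent.const_mul _), integral_const, probReal_univ,
          one_smul, integral_const_mul]

theorem integrable_meanSqDist (ν : Measure (AddCircle T)) [IsFiniteMeasure ν] :
    Integrable (meanSqDist ν) :=
  (by fun_prop : Continuous fun q : AddCircle T × AddCircle T =>
    dist q.2 q.1 ^ 2).integrable_of_compactSpace.integral_prod_left

theorem integral_meanSqDist (ν : Measure (AddCircle T)) [IsProbabilityMeasure ν] :
    ∫ t, meanSqDist ν t = ∫ u : AddCircle T, ‖u‖ ^ 2 := by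
  unfold meanSqDist
  rw [integral_integral_swap
    (by fun_prop : Continuous fun q : AddCircle T × AddCircle T =>
      dist q.2 q.1 ^ 2).integrable_of_compactSpace]
  simp only [integral_comp_dist_eq volume (· ^ 2), integral_const, probReal_univ, one_smul]

theorem eq_of_forall_meanSqDist_eq_add_const {ν ν' : Measure (AddCircle T)}
    [IsProbabilityMeasure ν] [IsProbabilityMeasure ν'] {c : ℝ}
    (h : ∀ t, meanSqDist ν' t = meanSqDist ν t + c) : ν' = ν := by
  have hT₀ := hT.out
  obtain rfl : c = 0 := by
    have hav := integral_meanSqDist ν'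
    rw [integral_congr_ae (ae_of_all _ h), integral_add (integrable_meanSqDist ν)
      (integrable_const c), integral_meanSqDist, integral_const] at hav
    simpa [measureReal_def, hT₀.le, hT₀.ne'] using hav
  refine Measure.ext_of_forall_integral_max_sub_dist_eq ?_
  filter_upwards [Ioc_mem_nhdsGT (by positivity : (0 : ℝ) < T / 4)] with ε hε a
  have hν' := meanSqDist_second_diff ν' (a - ((T / 2 : ℝ) : AddCircle T)) hε.1.le hε.2
  have hν := meanSqDist_second_diff ν (a - ((T / 2 : ℝ) : AddCircle T)) hε.1.le hε.2
  simp only [sub_add_cancel, h, add_zero] at hν hν'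
  exact mul_left_cancel₀ (by positivity : 2 * T ≠ 0) (by linarith)

end AddCircle

theorem integral_eq_integral_map_fst_of_map_snd_eq_dirac {X Y : Type*} [MeasurableSpace X]
    [MeasurableSpace Y] [MeasurableSingletonClass Y] {π : Measure (X × Y)} {y : Y}
    (hπ : π.map Prod.snd = Measure.dirac y) {f : X × Y → ℝ}
    (hf : AEStronglyMeasurable (fun x => f (x, y)) (π.map Prod.fst)) :
    ∫ q, f q ∂π = ∫ x, f (x, y) ∂(π.map Prod.fst) := by
  have hy : ∀ᵐ q ∂π, y = q.2 :=
    ae_of_ae_map measurable_snd.aemeasurable (by rw [hπ, ae_dirac_eq]; exact rfl)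
  rw [integral_map measurable_fst.aemeasurable hf]
  exact integral_congr_ae (hy.mono fun q hq => by rw [hq])

theorem wassersteinDist_dirac {X : Type*} [MeasurableSpace X] [MeasurableSingletonClass X]
    {c : X → X → ℝ} (p : ℝ) (μ : Measure X) [IsProbabilityMeasure μ] {x : X}
    (hc : Measurable fun y => c y x) :
    wassersteinDist c p μ (Measure.dirac x) = (∫ y, c y x ^ p ∂μ) ^ (1 / p) := by
  have hcp : AEStronglyMeasurable (fun y => c y x ^ p) μ := (hc.pow_const p).aestronglyMeasurable
  have hcoupling : ∀ π : Measure (X × X), π.map Prod.fst = μ →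
      π.map Prod.snd = Measure.dirac x → ∫ q, c q.1 q.2 ^ p ∂π = ∫ y, c y x ^ p ∂μ :=
    fun π hfst hsnd => by
      rw [integral_eq_integral_map_fst_of_map_snd_eq_dirac hsnd (by rwa [hfst]), hfst]
  suffices h : {r : ℝ | ∃ π : Measure (X × X), IsProbabilityMeasure π ∧ π.map Prod.fst = μ ∧
      π.map Prod.snd = Measure.dirac x ∧ r = ∫ q, c q.1 q.2 ^ p ∂π} = {∫ y, c y x ^ p ∂μ} by
    rw [wassersteinDist, h, csInf_singleton]
  ext r
  constructor
  · rintro ⟨π, -, hfst, hsnd, rfl⟩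
    exact hcoupling π hfst hsnd
  · rintro rfl
    have hfst : (μ.prod (Measure.dirac x)).map Prod.fst = μ := by simp
    have hsnd : (μ.prod (Measure.dirac x)).map Prod.snd = Measure.dirac x := by simp
    exact ⟨_, inferInstance, hfst, hsnd, (hcoupling _ hfst hsnd).symm⟩

section Torus

variable {n : ℕ}

theorem torusDist_rpow_two (x y : Torus n) :
    torusDist x y ^ (2 : ℝ) = ∑ k, dist (x k) (y k) ^ 2 := by
  rw [Real.rpow_two, torusDist, Real.sq_sqrt (by positivity)]

theorem continuous_torusDist_left (x : Torus n) : Continuous fun y => torusDist y x := by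
  unfold torusDist
  fun_prop

theorem integral_torusDist_rpow_two (μ : Measure (Torus n)) [IsFiniteMeasure μ] (x : Torus n) :
    ∫ y, torusDist y x ^ (2 : ℝ) ∂μ = ∑ k, meanSqDist (μ.map fun y => y k) (x k) := by
  simp only [torusDist_rpow_two]
  rw [integral_finsetSum _ fun k _ => (by fun_prop : Continuous fun y : Torus n =>
    dist (y k) (x k) ^ 2).integrable_of_compactSpace]
  refine Finset.sum_congr rfl fun k _ => ?_
  rw [meanSqDist, integral_map (measurable_pi_apply k).aemeasurable
    (by fun_prop : Continuous fun s => dist s (x k) ^ 2).aestronglyMeasurable]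

theorem map_eval_eq_of_forall_integral_torusDist_rpow_two_eq {μ ν : Measure (Torus n)}
    [IsProbabilityMeasure μ] [IsProbabilityMeasure ν]
    (h : ∀ x, ∫ y, torusDist y x ^ (2 : ℝ) ∂ν = ∫ y, torusDist y x ^ (2 : ℝ) ∂μ) (j : Fin n) :
    ν.map (fun y => y j) = μ.map (fun y => y j) := by
  simp only [integral_torusDist_rpow_two] at h
  have := Measure.isProbabilityMeasure_map (μ := μ) (measurable_pi_apply j).aemeasurable
  have := Measure.isProbabilityMeasure_map (μ := ν) (measurable_pi_apply j).aemeasurable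
  refine AddCircle.eq_of_forall_meanSqDist_eq_add_const
    (c := meanSqDist (ν.map fun y => y j) 0 - meanSqDist (μ.map fun y => y j) 0) fun t => ?_
  exact sub_eq_iff_eq_add'.1 (sub_eq_sub_of_forall_sum_apply_eq h 0 j t)

end Torus

theorem wasserstein_torus_isometry_preserves_marginals_general {n : ℕ}
    (Φ : Measure (Torus n) → Measure (Torus n))
    (hbij : Set.BijOn Φ {μ : Measure (Torus n) | IsProbabilityMeasure μ}
      {μ : Measure (Torus n) | IsProbabilityMeasure μ})
    (hiso : ∀ μ ν : Measure (Torus n), IsProbabilityMeasure μ → IsProbabilityMeasure ν →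
      wassersteinDist torusDist 2 (Φ μ) (Φ ν) = wassersteinDist torusDist 2 μ ν)
    (hdirac : ∀ x : Torus n, Φ (Measure.dirac x) = Measure.dirac x) :
    ∀ μ : Measure (Torus n), IsProbabilityMeasure μ →
      ((∀ (z : Torus n) (j : Fin n),
          Φ μ {y : Torus n | y j = z j} = μ {y : Torus n | y j = z j}) ∧
        (∀ j : Fin n, (Φ μ).map (fun y : Torus n => y j) =
          μ.map (fun y : Torus n => y j))) := by
  intro μ hμ
  have : IsProbabilityMeasure (Φ μ) := hbij.mapsTo hμ
  have hnonneg : ∀ (ρ : Measure (Torus n)) (x : Torus n), 0 ≤ ∫ y, torusDist y x ^ (2 : ℝ) ∂ρ :=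
    fun ρ x => integral_nonneg fun y => Real.rpow_nonneg (Real.sqrt_nonneg _) _
  have hmoment : ∀ x : Torus n,
      ∫ y, torusDist y x ^ (2 : ℝ) ∂(Φ μ) = ∫ y, torusDist y x ^ (2 : ℝ) ∂μ := fun x => by
    have h := hiso μ (Measure.dirac x) hμ inferInstance
    rw [hdirac, wassersteinDist_dirac _ _ (continuous_torusDist_left x).measurable,
      wassersteinDist_dirac _ _ (continuous_torusDist_left x).measurable] at h
    exact Real.rpow_left_injOn (by norm_num) (hnonneg _ x) (hnonneg _ x) h
  have hmarg := map_eval_eq_of_forall_integral_torusDist_rpow_two_eq hmoment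
  refine ⟨fun z j => ?_, hmarg⟩
  have h := congrArg (· {z j}) (hmarg j)
  rw [Measure.map_apply (measurable_pi_apply j) isClosed_singleton.measurableSet,
    Measure.map_apply (measurable_pi_apply j) isClosed_singleton.measurableSet] at h
  exact h

/-- An isometry of `W₂(𝕋ⁿ)` (`n ≥ 2`) fixing all Dirac measures preserves the
masses of the hyperplanes `H(z,j) = {y : y_j = z_j}` and hence the
one-dimensional marginals. -/
theorem wasserstein_torus_isometry_preserves_marginals {n : ℕ} (hn : 2 ≤ n)
    (Φ : Measure (Torus n) → Measure (Torus n))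
    (hbij : Set.BijOn Φ {μ : Measure (Torus n) | IsProbabilityMeasure μ}
      {μ : Measure (Torus n) | IsProbabilityMeasure μ})
    (hiso : ∀ μ ν : Measure (Torus n), IsProbabilityMeasure μ → IsProbabilityMeasure ν →
      wassersteinDist torusDist 2 (Φ μ) (Φ ν) = wassersteinDist torusDist 2 μ ν)
    (hdirac : ∀ x : Torus n, Φ (Measure.dirac x) = Measure.dirac x) :
    ∀ μ : Measure (Torus n), IsProbabilityMeasure μ →
      ((∀ (z : Torus n) (j : Fin n),
          Φ μ {y : Torus n | y j = z j} = μ {y : Torus n | y j = z j}) ∧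
        (∀ j : Fin n, (Φ μ).map (fun y : Torus n => y j) =
          μ.map (fun y : Torus n => y j))) :=
  wasserstein_torus_isometry_preserves_marginals_general Φ hbij hiso hdirac
end
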